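/- Let t₀ ≥ 0 and let A : [t₀,∞) → (0,∞) be continuous with ∫_{t₀}^∞ A(t) dt = ∞. If Θ : [t₀,∞) → ℝ is a bounded twice differentiable function with Θ''(t) = A(t)Θ(t) for all t ≥ t₀, then Θ(t) → 0 as t → ∞. -/

import Mathlib

/-!
The function `g = Θ Θ'` has derivative `Θ'² + A Θ² ≥ 0`, so it is nondecreasing. If `g` were
positive somewhere, then `(Θ²)' = 2g` would stay above a positive constant and `Θ²` would grow
linearly, contradicting boundedness; hence `g ≤ 0` and `Θ²` is nonincreasing. If `Θ²` stayed above
some `ε > 0`, then `g' ≥ ε A` would give `ε ∫_{t₀}^b A ≤ g(b) - g(t₀) ≤ -g(t₀)` for every `b`,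
contradicting `∫_{t₀}^∞ A = ∞`.
-/

open MeasureTheory Filter Set

/-- `Θ`, with derivative `Θ'`, solves the second order linear ODE `Θ'' = A Θ` on the
half-line `[t₀, ∞)` (derivatives at the endpoint `t₀` are one-sided). -/
def IsSolOn (t₀ : ℝ) (A Θ Θ' : ℝ → ℝ) : Prop :=
  ∀ t ∈ Set.Ici t₀,
    HasDerivWithinAt Θ (Θ' t) (Set.Ici t₀) t ∧
    HasDerivWithinAt Θ' (A t * Θ t) (Set.Ici t₀) t

section HalfLine

variable {a : ℝ} {f f' : ℝ → ℝ}

theorem continuousOn_Ici_of_hasDerivWithinAt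
    (hf : ∀ t ∈ Ici a, HasDerivWithinAt f (f' t) (Ici a) t) : ContinuousOn f (Ici a) :=
  fun t ht => (hf t ht).continuousWithinAt

theorem monotoneOn_Ici_of_hasDerivWithinAt_nonneg
    (hf : ∀ t ∈ Ici a, HasDerivWithinAt f (f' t) (Ici a) t) (hf' : ∀ t > a, 0 ≤ f' t) :
    MonotoneOn f (Ici a) := by
  refine monotoneOn_of_hasDerivWithinAt_nonneg (f' := f') (convex_Ici a)
    (continuousOn_Ici_of_hasDerivWithinAt hf) ?_ ?_ <;> rw [interior_Ici]
  · exact fun t ht => (hf t (Ioi_subset_Ici_self ht)).mono Ioi_subset_Ici_self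
  · exact hf'

theorem antitoneOn_Ici_of_hasDerivWithinAt_nonpos
    (hf : ∀ t ∈ Ici a, HasDerivWithinAt f (f' t) (Ici a) t) (hf' : ∀ t > a, f' t ≤ 0) :
    AntitoneOn f (Ici a) := by
  refine antitoneOn_of_hasDerivWithinAt_nonpos (f' := f') (convex_Ici a)
    (continuousOn_Ici_of_hasDerivWithinAt hf) ?_ ?_ <;> rw [interior_Ici]
  · exact fun t ht => (hf t (Ioi_subset_Ici_self ht)).mono Ioi_subset_Ici_self
  · exact hf'

theorem integral_le_sub_of_hasDerivWithinAt_Ici {φ : ℝ → ℝ} {b c : ℝ}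
    (hf : ∀ t ∈ Ici a, HasDerivWithinAt f (f' t) (Ici a) t) (hab : a ≤ b) (hbc : b ≤ c)
    (hφ : IntegrableOn φ (Icc b c)) (hφf : ∀ t ∈ Ioo b c, φ t ≤ f' t) :
    ∫ t in b..c, φ t ≤ f c - f b :=
  intervalIntegral.integral_le_sub_of_hasDeriv_right_of_le hbc
    ((continuousOn_Ici_of_hasDerivWithinAt hf).mono fun _ ht => hab.trans ht.1)
    (fun t ht => (hf t (hab.trans ht.1.le)).mono fun _ hs => hab.trans (ht.1.le.trans hs.le))
    hφ hφf

end HalfLine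

theorem lintegral_Ici_ofReal_ne_top_of_intervalIntegral_le {a I : ℝ} {f : ℝ → ℝ}
    (hf : ∀ b, IntegrableOn f (Ioc a b)) (hf₀ : ∀ t ≥ a, 0 ≤ f t)
    (hI : ∀ b ≥ a, ∫ t in a..b, f t ≤ I) :
    ∫⁻ t in Ici a, ENNReal.ofReal (f t) ≠ ⊤ := by
  have hint : IntegrableOn f (Ioi a) := by
    refine integrableOn_Ioi_of_intervalIntegral_norm_bounded I a hf tendsto_id ?_
    filter_upwards [eventually_ge_atTop a] with b hb
    rw [intervalIntegral.integral_congr (g := f) fun t ht => ?_]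
    · exact hI b hb
    · rw [uIcc_of_le hb] at ht
      exact Real.norm_of_nonneg (hf₀ t ht.1)
  have hnonneg : 0 ≤ᵐ[volume.restrict (Ioi a)] f :=
    (ae_restrict_mem measurableSet_Ioi).mono fun t ht => hf₀ t (le_of_lt ht)
  rw [Measure.restrict_congr_set Ioi_ae_eq_Ici.symm,
    ← ofReal_integral_eq_lintegral_ofReal hint hnonneg]
  exact ENNReal.ofReal_ne_top

namespace IsSolOn

variable {t₀ : ℝ} {A Θ Θ' : ℝ → ℝ}

theorem hasDerivWithinAt_sq (h : IsSolOn t₀ A Θ Θ') {t : ℝ} (ht : t ∈ Ici t₀) :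
    HasDerivWithinAt (fun s => Θ s ^ 2) (2 * (Θ t * Θ' t)) (Ici t₀) t :=
  ((h t ht).1.fun_pow 2).congr_deriv (by ring)

theorem hasDerivWithinAt_mul_deriv (h : IsSolOn t₀ A Θ Θ') {t : ℝ} (ht : t ∈ Ici t₀) :
    HasDerivWithinAt (fun s => Θ s * Θ' s) (Θ' t ^ 2 + A t * Θ t ^ 2) (Ici t₀) t :=
  ((h t ht).1.mul (h t ht).2).congr_deriv (by ring)

theorem monotoneOn_mul_deriv (h : IsSolOn t₀ A Θ Θ') (hA : ∀ t ≥ t₀, 0 ≤ A t) :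
    MonotoneOn (fun t => Θ t * Θ' t) (Ici t₀) :=
  monotoneOn_Ici_of_hasDerivWithinAt_nonneg (fun _ ht => h.hasDerivWithinAt_mul_deriv ht)
    fun t ht => by have := hA t ht.le; positivity

theorem mul_deriv_nonpos (h : IsSolOn t₀ A Θ Θ') (hA : ∀ t ≥ t₀, 0 ≤ A t) {M : ℝ}
    (hM : ∀ t ≥ t₀, |Θ t| ≤ M) {t : ℝ} (ht : t₀ ≤ t) : Θ t * Θ' t ≤ 0 := by
  by_contra! hpos
  set c := Θ t * Θ' t
  have hlinear : ∀ b ≥ t, 2 * c * (b - t) ≤ M ^ 2 := fun b hb =>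
    calc 2 * c * (b - t) = ∫ _ in t..b, 2 * c := by
          rw [intervalIntegral.integral_const, smul_eq_mul, mul_comm]
      _ ≤ Θ b ^ 2 - Θ t ^ 2 :=
        integral_le_sub_of_hasDerivWithinAt_Ici (fun _ hs => h.hasDerivWithinAt_sq hs) ht hb
          (integrableOn_const measure_Icc_lt_top.ne) fun s hs => by
            have := h.monotoneOn_mul_deriv hA ht (ht.trans hs.1.le) hs.1.le
            linarith
      _ ≤ M ^ 2 := by
        obtain ⟨hlow, hupp⟩ := abs_le.1 (hM b (ht.trans hb))
        linarith [sq_le_sq' hlow hupp, sq_nonneg (Θ t)]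
  have := hlinear (t + (M ^ 2 + 1) / (2 * c)) (le_add_of_nonneg_right (by positivity))
  rw [add_sub_cancel_left, mul_div_cancel₀ _ (by positivity)] at this
  linarith

theorem antitoneOn_sq (h : IsSolOn t₀ A Θ Θ') (hA : ∀ t ≥ t₀, 0 ≤ A t) {M : ℝ}
    (hM : ∀ t ≥ t₀, |Θ t| ≤ M) : AntitoneOn (fun t => Θ t ^ 2) (Ici t₀) :=
  antitoneOn_Ici_of_hasDerivWithinAt_nonpos (fun _ ht => h.hasDerivWithinAt_sq ht)
    fun t ht => by linarith [h.mul_deriv_nonpos hA hM ht.le]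

theorem exists_sq_lt (h : IsSolOn t₀ A Θ Θ') (hAc : ContinuousOn A (Ici t₀))
    (hA : ∀ t ≥ t₀, 0 ≤ A t) (hAint : ∫⁻ t in Ici t₀, ENNReal.ofReal (A t) = ⊤) {M : ℝ}
    (hM : ∀ t ≥ t₀, |Θ t| ≤ M) {ε : ℝ} (hε : 0 < ε) : ∃ T ≥ t₀, Θ T ^ 2 < ε := by
  by_contra! hge
  have hloc : ∀ b, IntegrableOn A (Icc t₀ b) := fun b =>
    (hAc.mono Icc_subset_Ici_self).integrableOn_Icc
  refine lintegral_Ici_ofReal_ne_top_of_intervalIntegral_le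
    (fun b => (hloc b).mono_set Ioc_subset_Icc_self) hA (I := -(Θ t₀ * Θ' t₀) / ε)
    (fun b hb => ?_) hAint
  rw [le_div_iff₀' hε, ← intervalIntegral.integral_const_mul]
  calc ∫ t in t₀..b, ε * A t ≤ Θ b * Θ' b - Θ t₀ * Θ' t₀ :=
        integral_le_sub_of_hasDerivWithinAt_Ici (fun _ ht => h.hasDerivWithinAt_mul_deriv ht)
          le_rfl hb ((hloc b).const_mul ε) fun t ht => by
            nlinarith [hge t ht.1.le, hA t ht.1.le, sq_nonneg (Θ' t)]
    _ ≤ -(Θ t₀ * Θ' t₀) := by linarith [h.mul_deriv_nonpos hA hM hb]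

end IsSolOn

theorem bounded_solution_tendsto_zero_general (t₀ : ℝ)
    (A : ℝ → ℝ) (hAc : ContinuousOn A (Set.Ici t₀)) (hApos : ∀ t ≥ t₀, 0 < A t)
    (hAint : (∫⁻ t in Set.Ici t₀, ENNReal.ofReal (A t)) = ⊤)
    (Θ Θ' : ℝ → ℝ) (hsol : IsSolOn t₀ A Θ Θ')
    (hbdd : ∃ M, ∀ t ≥ t₀, |Θ t| ≤ M) :
    Filter.Tendsto Θ Filter.atTop (nhds 0) := by
  obtain ⟨M, hM⟩ := hbdd
  have hA : ∀ t ≥ t₀, 0 ≤ A t := fun t ht => (hApos t ht).le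
  refine Metric.tendsto_atTop.2 fun ε hε => ?_
  obtain ⟨T, hT, hTε⟩ := hsol.exists_sq_lt hAc hA hAint hM (pow_pos hε 2)
  refine ⟨T, fun t ht => ?_⟩
  rw [Real.dist_0_eq_abs]
  exact abs_lt_of_sq_lt_sq
    ((hsol.antitoneOn_sq hA hM hT (hT.trans ht) ht).trans_lt hTε) hε.le

theorem bounded_solution_tendsto_zero (t₀ : ℝ) (ht₀ : 0 ≤ t₀)
    (A : ℝ → ℝ) (hAc : ContinuousOn A (Set.Ici t₀)) (hApos : ∀ t ≥ t₀, 0 < A t)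
    (hAint : (∫⁻ t in Set.Ici t₀, ENNReal.ofReal (A t)) = ⊤)
    (Θ Θ' : ℝ → ℝ) (hsol : IsSolOn t₀ A Θ Θ')
    (hbdd : ∃ M, ∀ t ≥ t₀, |Θ t| ≤ M) :
    Filter.Tendsto Θ Filter.atTop (nhds 0) :=
  bounded_solution_tendsto_zero_general t₀ A hAc hApos hAint Θ Θ' hsol hbdd
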